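/- Assume the setup for induced HNN sequences: {G_i, λ_i} is an inverse sequence of groups, for each i there are subgroups H_i, H_i′ ≤ G_i and an isomorphism φ_i : H_i → H_i′, and for each i ≥ 1 one has λ_i(H_i) ⊆ H_{i−1}, λ_i(H_i′) ⊆ H_{i−1}′, and φ_{i−1}(λ_i(h)) = λ_i(φ_i(h)) for all h ∈ H_i. If the induced HNN sequence {G_i∗_{φ_i}, λ̄_i} is pro-monomorphic, then the base sequence {G_i, λ_i} is pro-monomorphic. -/
import Mathlib



universe u

/-- The composite bonding homomorphism `λ_{i,j} : G_j →* G_i` of an inverse sequence of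
groups, for `i ≤ j`. -/
def invSeqComp {G : ℕ → Type u} [∀ i, Group (G i)] (lam : ∀ i, G (i + 1) →* G i)
    {i j : ℕ} (h : i ≤ j) : G j →* G i :=
  Nat.leRecOn h (fun {k} f => f.comp (lam k)) (MonoidHom.id (G i))

/-- An inverse sequence of groups is **pro-monomorphic** if there exists `i` such that for
every `j ≥ i` there exists `k₀ ≥ j` with `ker (λ_{i,k}) = ker (λ_{j,k})` for all `k ≥ k₀`. -/
def ProMono {G : ℕ → Type u} [∀ i, Group (G i)] (lam : ∀ i, G (i + 1) →* G i) : Prop :=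
  ∃ i : ℕ, ∀ j : ℕ, ∀ hij : i ≤ j, ∃ k₀ : ℕ, ∃ hjk₀ : j ≤ k₀, ∀ k : ℕ, ∀ hk₀k : k₀ ≤ k,
    (invSeqComp lam (hij.trans (hjk₀.trans hk₀k))).ker =
      (invSeqComp lam (hjk₀.trans hk₀k)).ker

/-- An inverse sequence of groups is **semistable** (Mittag-Leffler) if for every `i` there
exists `j ≥ i` such that `Im (λ_{i,k}) = Im (λ_{i,j})` for all `k ≥ j`. -/
def Semistable {G : ℕ → Type u} [∀ i, Group (G i)] (lam : ∀ i, G (i + 1) →* G i) : Prop :=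
  ∀ i : ℕ, ∃ j : ℕ, ∃ hij : i ≤ j, ∀ k : ℕ, ∀ hjk : j ≤ k,
    (invSeqComp lam (hij.trans hjk)).range = (invSeqComp lam hij).range

/-- An inverse sequence of groups is **stable** if it is pro-monomorphic and semistable. -/
def Stable {G : ℕ → Type u} [∀ i, Group (G i)] (lam : ∀ i, G (i + 1) →* G i) : Prop :=
  ProMono lam ∧ Semistable lam

private lemma invSeqComp_self' {G : ℕ → Type u} [∀ i, Group (G i)] (lam : ∀ i, G (i + 1) →* G i)
    {i : ℕ} (h : i ≤ i) : invSeqComp lam h = MonoidHom.id (G i) :=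
  Nat.leRecOn_self _

private lemma invSeqComp_succ' {G : ℕ → Type u} [∀ i, Group (G i)] (lam : ∀ i, G (i + 1) →* G i)
    {i j : ℕ} (h : i ≤ j) (h2 : i ≤ j + 1) :
    invSeqComp lam h2 = (invSeqComp lam h).comp (lam j) :=
  Nat.leRecOn_succ h _

/-- In the setup for induced HNN sequences, if the induced HNN sequence
`{G_i∗_{φ_i}, λ̄_i}` is pro-monomorphic, then the base sequence `{G_i, λ_i}` is
pro-monomorphic. -/
theorem base_proMono_of_induced_HNN_sequence_proMono
    {G : ℕ → Type u} [∀ i, Group (G i)] (lam : ∀ i, G (i + 1) →* G i)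
    (H H' : ∀ i, Subgroup (G i)) (φ : ∀ i, H i ≃* H' i)
    (hH : ∀ i, ∀ h ∈ H (i + 1), lam i h ∈ H i)
    (hH' : ∀ i, ∀ h ∈ H' (i + 1), lam i h ∈ H' i)
    (hcomp : ∀ i (h : H (i + 1)) (hm : lam i (h : G (i + 1)) ∈ H i),
      ((φ i) ⟨lam i (h : G (i + 1)), hm⟩ : G i) = lam i ((φ (i + 1)) h))
    (lamBar : ∀ i, HNNExtension (G (i + 1)) (H (i + 1)) (H' (i + 1)) (φ (i + 1)) →*
      HNNExtension (G i) (H i) (H' i) (φ i))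
    (hBarOf : ∀ i (g : G (i + 1)), lamBar i (HNNExtension.of g) = HNNExtension.of (lam i g))
    (hBarT : ∀ i, lamBar i HNNExtension.t = HNNExtension.t) :
    ProMono (G := fun i => HNNExtension (G i) (H i) (H' i) (φ i)) lamBar → ProMono lam := by
  rintro ⟨i, hi⟩
  -- commutation of invSeqComp with `of`
  have key : ∀ {a b : ℕ} (hab : a ≤ b) (g : G b),
      invSeqComp (G := fun i => HNNExtension (G i) (H i) (H' i) (φ i)) lamBar hab
          (HNNExtension.of g) = HNNExtension.of (invSeqComp lam hab g) := by
    intro a b hab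
    induction b, hab using Nat.le_induction with
    | base =>
      intro g
      rw [invSeqComp_self' lam, invSeqComp_self' (G := fun i => HNNExtension (G i) (H i) (H' i) (φ i)) lamBar]
      rfl
    | succ n hn ih =>
      intro g
      rw [invSeqComp_succ' lam hn, invSeqComp_succ' (G := fun i => HNNExtension (G i) (H i) (H' i) (φ i)) lamBar hn]
      simp only [MonoidHom.comp_apply, hBarOf, ih]
  refine ⟨i, fun j hij => ?_⟩
  obtain ⟨k₀, hjk₀, hk⟩ := hi j hij
  refine ⟨k₀, hjk₀, fun k hk₀k => ?_⟩
  have hker := hk k hk₀k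
  ext g
  simp only [MonoidHom.mem_ker]
  constructor
  · intro hg
    have : invSeqComp (G := fun i => HNNExtension (G i) (H i) (H' i) (φ i)) lamBar
        (hij.trans (hjk₀.trans hk₀k)) (HNNExtension.of g) = 1 := by
      rw [key, hg, map_one]
    rw [← MonoidHom.mem_ker, hker, MonoidHom.mem_ker, key] at this
    refine HNNExtension.of_injective (φ := φ j) ?_
    rw [map_one]
    simpa using this
  · intro hg
    have : invSeqComp (G := fun i => HNNExtension (G i) (H i) (H' i) (φ i)) lamBar
        (hjk₀.trans hk₀k) (HNNExtension.of g) = 1 := by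
      rw [key, hg, map_one]
    rw [← MonoidHom.mem_ker, ← hker, MonoidHom.mem_ker, key] at this
    refine HNNExtension.of_injective (φ := φ i) ?_
    rw [map_one]
    simpa using this
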